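/- Assume that for every i ∈ 𝐈 the function h_i is strictly increasing on [x*_i, ∞). Then the mapping F : [0,∞) → ℝ^I, where F(t) is the ⪕-greatest element of A_t, is continuous on [0,∞). -/
import Mathlib


/-- The set of indices at which `a` attains its minimum. -/
noncomputable def argminSet {n : ℕ} (a : Fin n → ℝ) : Finset (Fin n) :=
  Finset.univ.filter (fun i => ∀ j, a i ≤ a j)

/-- The minimum entry of `a`. -/
noncomputable def minval {n : ℕ} (a : Fin n → ℝ) : ℝ := ⨅ i, a i

/-- The restriction of `a` to the indices in `S`, reindexed by `Fin S.card`
in increasing order. -/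
noncomputable def restrictVec {n : ℕ} (S : Finset (Fin n)) (a : Fin n → ℝ) :
    Fin S.card → ℝ :=
  fun i => a (S.orderIsoOfFin rfl i).1

/-- The "min-sensitive" partial order `⪕` on `ℝⁿ` (Definition 1 of the paper):
for `n = 1` it is the usual order; for `n ≥ 2`, `a ⪕ b` iff (i) `a = b`, or
(ii) `min a < min b`, or (iii) `min a = min b` and `Argmin b ⊊ Argmin a`, or
(iv) `min a = min b`, `Argmin a = Argmin b ⊊ {1,...,n}` and the restrictions
of `a` and `b` to the complement of the common argmin set are related. -/
noncomputable def msLE : (n : ℕ) → (Fin n → ℝ) → (Fin n → ℝ) → Prop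
  | 0, _, _ => True
  | 1, a, b => a 0 ≤ b 0
  | n + 2, a, b =>
    a = b ∨
    minval a < minval b ∨
    (minval a = minval b ∧ argminSet b ⊂ argminSet a) ∨
    (minval a = minval b ∧ argminSet a = argminSet b ∧ argminSet a ⊂ Finset.univ ∧
      msLE ((argminSet a)ᶜ).card (restrictVec (argminSet a)ᶜ a) (restrictVec (argminSet a)ᶜ b))
termination_by n => n
decreasing_by
  have hne : (argminSet a).Nonempty := by
    obtain ⟨i, -, hi⟩ := Finset.exists_min_image Finset.univ a ⟨0, Finset.mem_univ 0⟩
    refine ⟨i, ?_⟩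
    unfold argminSet
    exact Finset.mem_filter.mpr ⟨Finset.mem_univ i, fun j => hi j (Finset.mem_univ j)⟩
  have h1 : 0 < (argminSet a).card := Finset.card_pos.mpr hne
  have h2 : ((argminSet a)ᶜ).card = Fintype.card (Fin (n + 2)) - (argminSet a).card :=
    Finset.card_compl _
  simp only [Fintype.card_fin] at h2
  omega

/-- `x*_i`: the supremum of the zero set of a function. -/
noncomputable def xstar (f : ℝ → ℝ) : ℝ := sSup {x | f x = 0}

/-- The admissible set `A_t`. -/
def admissible (I J : ℕ) (h : Fin I → ℝ → ℝ) (G : Fin J → Finset (Fin I)) (t : ℝ) :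
    Set (Fin I → ℝ) :=
  {a | (∀ i, a i ≤ t) ∧ ∀ j, (∑ i ∈ G j, h i (a i)) ≤ t}

/-- `F` is the `⪕`-greatest element of `A_t`. -/
def IsGreatestMS (I J : ℕ) (h : Fin I → ℝ → ℝ) (G : Fin J → Finset (Fin I)) (t : ℝ)
    (F : Fin I → ℝ) : Prop :=
  F ∈ admissible I J h G t ∧ ∀ a ∈ admissible I J h G t, msLE I a F

open Filter Finset Topology

lemma mem_argminSet_iff {n : ℕ} {a : Fin n → ℝ} {i : Fin n} :
    i ∈ argminSet a ↔ ∀ j, a i ≤ a j := by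
  simp [argminSet]

lemma argminSet_nonempty {n : ℕ} [Nonempty (Fin n)] (a : Fin n → ℝ) :
    (argminSet a).Nonempty := by
  obtain ⟨i, -, hi⟩ := Finset.exists_min_image Finset.univ a
    ⟨Classical.arbitrary _, Finset.mem_univ _⟩
  exact ⟨i, mem_argminSet_iff.mpr fun j => hi j (Finset.mem_univ j)⟩

lemma minval_le {n : ℕ} (a : Fin n → ℝ) (i : Fin n) : minval a ≤ a i :=
  ciInf_le (Set.Finite.bddBelow (Set.finite_range a)) i

lemma le_minval {n : ℕ} [Nonempty (Fin n)] (a : Fin n → ℝ) (c : ℝ)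
    (hc : ∀ i, c ≤ a i) : c ≤ minval a := le_ciInf hc

lemma minval_eq {n : ℕ} {a : Fin n → ℝ} {i : Fin n} (hi : i ∈ argminSet a) :
    minval a = a i := by
  have : Nonempty (Fin n) := ⟨i⟩
  exact le_antisymm (minval_le a i) (le_minval a _ (mem_argminSet_iff.mp hi))

lemma lt_of_notMem_argminSet {n : ℕ} [Nonempty (Fin n)] {a : Fin n → ℝ} {i : Fin n}
    (hi : i ∉ argminSet a) : minval a < a i := by
  rcases lt_or_ge (minval a) (a i) with hlt | hle
  · exact hlt
  · exact absurd (mem_argminSet_iff.mpr fun j => le_trans hle (minval_le a j)) hi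

lemma minval_const {n : ℕ} [Nonempty (Fin n)] (c : ℝ) :
    minval (fun _ : Fin n => c) = c := ciInf_const

/-- the embedding `Fin S.card → Fin n` underlying `restrictVec`. -/
noncomputable def emb {n : ℕ} (S : Finset (Fin n)) : Fin S.card → Fin n :=
  fun i => (S.orderIsoOfFin rfl i).1

lemma restrictVec_apply {n : ℕ} (S : Finset (Fin n)) (a : Fin n → ℝ) (i : Fin S.card) :
    restrictVec S a i = a (emb S i) := rfl

lemma emb_mem {n : ℕ} (S : Finset (Fin n)) (i : Fin S.card) : emb S i ∈ S :=
  (S.orderIsoOfFin rfl i).2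

lemma emb_surj {n : ℕ} (S : Finset (Fin n)) {x : Fin n} (hx : x ∈ S) :
    ∃ i, emb S i = x :=
  ⟨(S.orderIsoOfFin rfl).symm ⟨x, hx⟩, by simp [emb]⟩

lemma emb_inj {n : ℕ} (S : Finset (Fin n)) : Function.Injective (emb S) :=
  fun i j hij => (S.orderIsoOfFin rfl).injective (Subtype.ext hij)

lemma msLE_refl : ∀ (n : ℕ) (a : Fin n → ℝ), msLE n a a := by
  intro n a
  match n with
  | 0 => rw [msLE]; trivial
  | 1 => rw [msLE]
  | (n+2) => rw [msLE]; exact Or.inl rfl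

lemma msLE_minval_le {n : ℕ} (hn : n ≠ 0) (a b : Fin n → ℝ) (hab : msLE n a b) :
    minval a ≤ minval b := by
  match n with
  | 0 => omega
  | 1 =>
    rw [msLE] at hab
    have : Nonempty (Fin 1) := ⟨0⟩
    refine le_minval _ _ fun i => ?_
    have : i = 0 := Subsingleton.elim _ _
    subst this
    exact le_trans (minval_le a 0) hab
  | (n+2) =>
    rw [msLE] at hab
    rcases hab with rfl | hlt | ⟨he, -⟩ | ⟨he, -⟩
    · exact le_refl _
    · exact le_of_lt hlt
    · exact le_of_eq he
    · exact le_of_eq he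

/-- The key "beating" lemma: if every coordinate of `u` is either equal to the
corresponding coordinate of `v` or strictly above `v k`, and `u k > v k`, then
`u` is not `⪕`-below ... i.e. `¬ msLE n u v`. -/
lemma beat : ∀ (n : ℕ) (u v : Fin n → ℝ) (k : Fin n),
    (∀ j, u j = v j ∨ v k < u j) → v k < u k → ¬ msLE n u v := by
  intro n
  induction n using Nat.strong_induction_on with
  | _ n IH =>
    match n with
    | 0 => exact fun u v k _ _ _ => k.elim0
    | 1 =>
      intro u v k hA hk hms
      rw [msLE] at hms
      have hk0 : k = 0 := Subsingleton.elim _ _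
      subst hk0
      exact absurd hms (not_le.mpr hk)
    | (n+2) =>
      intro u v k hA hk hms
      have hbound : ∀ j, minval v ≤ u j := by
        intro j
        rcases hA j with hj | hj
        · rw [hj]; exact minval_le v j
        · exact le_trans (minval_le v k) (le_of_lt hj)
      rw [msLE] at hms
      rcases hms with rfl | hlt | ⟨he, hss⟩ | ⟨he, hset, huniv, hrec⟩
      · exact lt_irrefl _ hk
      · exact absurd hlt (not_lt.mpr (le_minval _ _ hbound))
      · -- case iii : argminSet v ⊂ argminSet u
        obtain ⟨x, hxu, hxv⟩ := Finset.exists_of_ssubset hss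
        have hvx : minval v < v x := lt_of_notMem_argminSet hxv
        have hux : u x = minval v := by rw [← he]; exact (minval_eq hxu).symm
        rcases hA x with hx | hx
        · rw [hx] at hux; exact absurd hux (ne_of_gt hvx)
        · rw [hux] at hx; exact absurd hx (not_lt.mpr (minval_le v k))
      · -- case iv : recurse
        set M := argminSet u with hM
        have hkM : k ∉ M := by
          intro hkM
          have : u k = minval v := by rw [← he]; exact (minval_eq hkM).symm
          rw [this] at hk
          exact absurd hk (not_lt.mpr (minval_le v k))
        have hkMc : k ∈ Mᶜ := Finset.mem_compl.mpr hkM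
        obtain ⟨k', hk'⟩ := emb_surj Mᶜ hkMc
        have hcard : (Mᶜ).card < n + 2 := by
          have hne : M.Nonempty := argminSet_nonempty u
          have h1 : 0 < M.card := Finset.card_pos.mpr hne
          have h2 : (Mᶜ).card = Fintype.card (Fin (n+2)) - M.card := Finset.card_compl _
          simp only [Fintype.card_fin] at h2
          omega
        refine IH (Mᶜ).card hcard (restrictVec Mᶜ u) (restrictVec Mᶜ v) k' ?_ ?_ hrec
        · intro j'
          rw [restrictVec_apply, restrictVec_apply, restrictVec_apply, hk']
          exact hA (emb Mᶜ j')
        · rw [restrictVec_apply, restrictVec_apply, hk']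
          exact hk
/-- Structure extracted from a strict `⪕`-inequality: there is an initial
segment `L` (by levels) on which `a` and `b` agree, and below the rest either
(A) some index `j₀` outside `L` minimizes `a` there and sits strictly below all
of `b` outside `L`, or (B) some index `k` outside `L` minimizes `a` there, is a
lower bound for `b` there, and satisfies `a k < b k`. -/
lemma cert : ∀ (n : ℕ) (a b : Fin n → ℝ), msLE n a b → a ≠ b →
    ∃ L : Finset (Fin n),
      (∀ i ∈ L, a i = b i) ∧
      ((∃ j₀, j₀ ∉ L ∧ (∀ j, j ∉ L → a j₀ ≤ a j) ∧ (∀ j, j ∉ L → a j₀ < b j)) ∨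
       (∃ k, k ∉ L ∧ a k < b k ∧ (∀ j, j ∉ L → a k ≤ a j) ∧ (∀ j, j ∉ L → a k ≤ b j))) := by
  intro n
  induction n using Nat.strong_induction_on with
  | _ n IH =>
    match n with
    | 0 =>
      intro a b _ hne
      exact absurd (funext fun i => i.elim0) hne
    | 1 =>
      intro a b hms hne
      rw [msLE] at hms
      have h0 : a 0 ≠ b 0 := by
        intro h
        apply hne
        funext i
        have : i = 0 := Subsingleton.elim _ _
        rw [this, h]
      refine ⟨∅, by simp, Or.inl ⟨0, by simp, ?_, ?_⟩⟩
      · intro j _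
        have : j = 0 := Subsingleton.elim _ _
        rw [this]
      · intro j _
        have : j = 0 := Subsingleton.elim _ _
        rw [this]
        exact lt_of_le_of_ne hms h0
    | (n+2) =>
      intro a b hms hne
      rw [msLE] at hms
      rcases hms with rfl | hlt | ⟨he, hss⟩ | ⟨he, hset, huniv, hrec⟩
      · exact absurd rfl hne
      · obtain ⟨i₀, hi₀⟩ := argminSet_nonempty a
        refine ⟨∅, by simp, Or.inl ⟨i₀, by simp, ?_, ?_⟩⟩
        · exact fun j _ => mem_argminSet_iff.mp hi₀ j
        · intro j _
          calc a i₀ = minval a := (minval_eq hi₀).symm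
          _ < minval b := hlt
          _ ≤ b j := minval_le b j
      · obtain ⟨k, hka, hkb⟩ := Finset.exists_of_ssubset hss
        refine ⟨∅, by simp, Or.inr ⟨k, by simp, ?_, ?_, ?_⟩⟩
        · calc a k = minval a := (minval_eq hka).symm
          _ = minval b := he
          _ < b k := lt_of_notMem_argminSet hkb
        · exact fun j _ => mem_argminSet_iff.mp hka j
        · intro j _
          calc a k = minval a := (minval_eq hka).symm
          _ = minval b := he
          _ ≤ b j := minval_le b j
      · set M := argminSet a with hM
        have hbmem : ∀ x ∈ M, b x = minval b := by
          intro x hx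
          rw [hset] at hx
          exact (minval_eq hx).symm
        have hamem : ∀ x ∈ M, a x = minval a := fun x hx => (minval_eq hx).symm
        by_cases hres : restrictVec Mᶜ a = restrictVec Mᶜ b
        · exfalso
          apply hne
          funext x
          by_cases hx : x ∈ M
          · rw [hamem x hx, hbmem x hx, he]
          · obtain ⟨i', hi'⟩ := emb_surj Mᶜ (Finset.mem_compl.mpr hx)
            have := congrFun hres i'
            rw [restrictVec_apply, restrictVec_apply, hi'] at this
            exact this
        · have hcard : (Mᶜ).card < n + 2 := by
            have h1 : 0 < M.card := Finset.card_pos.mpr (argminSet_nonempty a)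
            have h2 : (Mᶜ).card = Fintype.card (Fin (n+2)) - M.card := Finset.card_compl _
            simp only [Fintype.card_fin] at h2
            omega
          obtain ⟨L', hL'eq, hL'cases⟩ :=
            IH (Mᶜ).card hcard (restrictVec Mᶜ a) (restrictVec Mᶜ b) hrec hres
          refine ⟨M ∪ L'.image (emb Mᶜ), ?_, ?_⟩
          · intro i hi
            rcases Finset.mem_union.mp hi with hi | hi
            · rw [hamem i hi, hbmem i hi, he]
            · obtain ⟨i', hi'L, hi'e⟩ := Finset.mem_image.mp hi
              have := hL'eq i' hi'L
              rw [restrictVec_apply, restrictVec_apply, hi'e] at this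
              exact this
          · -- membership transfer helpers
            have hout : ∀ j, j ∉ M ∪ L'.image (emb Mᶜ) → ∃ j', emb Mᶜ j' = j ∧ j' ∉ L' := by
              intro j hj
              rw [Finset.mem_union, not_or] at hj
              obtain ⟨j', hj'⟩ := emb_surj Mᶜ (Finset.mem_compl.mpr hj.1)
              refine ⟨j', hj', fun hmem => hj.2 (Finset.mem_image.mpr ⟨j', hmem, hj'⟩)⟩
            have hin : ∀ j', j' ∉ L' → emb Mᶜ j' ∉ M ∪ L'.image (emb Mᶜ) := by
              intro j' hj'
              rw [Finset.mem_union, not_or]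
              constructor
              · have := emb_mem Mᶜ j'
                exact Finset.mem_compl.mp this
              · intro hmem
                obtain ⟨x', hx'L, hx'e⟩ := Finset.mem_image.mp hmem
                exact hj' (emb_inj Mᶜ hx'e ▸ hx'L)
            rcases hL'cases with ⟨j₀', hj₀'L, hj₀'min, hj₀'lt⟩ | ⟨k', hk'L, hk'lt, hk'min, hk'le⟩
            · refine Or.inl ⟨emb Mᶜ j₀', hin j₀' hj₀'L, ?_, ?_⟩
              · intro j hj
                obtain ⟨j', hj'e, hj'L⟩ := hout j hj
                have := hj₀'min j' hj'L
                rw [restrictVec_apply, restrictVec_apply, hj'e] at this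
                exact this
              · intro j hj
                obtain ⟨j', hj'e, hj'L⟩ := hout j hj
                have := hj₀'lt j' hj'L
                rw [restrictVec_apply, restrictVec_apply, hj'e] at this
                exact this
            · refine Or.inr ⟨emb Mᶜ k', hin k' hk'L, ?_, ?_, ?_⟩
              · rw [restrictVec_apply, restrictVec_apply] at hk'lt
                exact hk'lt
              · intro j hj
                obtain ⟨j', hj'e, hj'L⟩ := hout j hj
                have := hk'min j' hj'L
                rw [restrictVec_apply, restrictVec_apply, hj'e] at this
                exact this
              · intro j hj
                obtain ⟨j', hj'e, hj'L⟩ := hout j hj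
                have := hk'le j' hj'L
                rw [restrictVec_apply, restrictVec_apply, hj'e] at this
                exact this
lemma xstar_zero_iff {f : ℝ → ℝ} (hc : Continuous f) (hnn : ∀ x, 0 ≤ f x)
    (hm : Monotone f) (ht : Filter.Tendsto f Filter.atTop Filter.atTop)
    (hz : ∃ x, f x = 0) (x : ℝ) : f x = 0 ↔ x ≤ xstar f := by
  have hbdd : BddAbove {x | f x = 0} := by
    obtain ⟨x₀, hx₀⟩ := Filter.eventually_atTop.mp (Filter.tendsto_atTop.mp ht 1)
    refine ⟨x₀, fun z hz' => ?_⟩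
    by_contra hzx
    have h1 : (1:ℝ) ≤ f z := hx₀ z (le_of_lt (not_le.mp hzx))
    rw [Set.mem_setOf_eq.mp hz'] at h1
    linarith
  have hclosed : IsClosed {x | f x = 0} := isClosed_eq hc continuous_const
  have hmem : f (xstar f) = 0 := hclosed.csSup_mem hz hbdd
  constructor
  · intro hx
    exact le_csSup hbdd hx
  · intro hx
    exact le_antisymm (by calc f x ≤ f (xstar f) := hm hx
                          _ = 0 := hmem) (hnn x)

lemma strict_decrease {f : ℝ → ℝ} (hc : Continuous f) (hnn : ∀ x, 0 ≤ f x)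
    (hm : Monotone f) (ht : Filter.Tendsto f Filter.atTop Filter.atTop)
    (hz : ∃ x, f x = 0) (hs : StrictMonoOn f (Set.Ici (xstar f)))
    {x δ : ℝ} (hx : 0 < f x) (hδ : 0 < δ) : f (x - δ) < f x := by
  have hxgt : xstar f < x := by
    by_contra hle
    rw [(xstar_zero_iff hc hnn hm ht hz x).mpr (not_lt.mp hle)] at hx
    exact lt_irrefl _ hx
  rcases le_or_gt (xstar f) (x - δ) with hge | hlt
  · exact hs hge (le_of_lt hxgt) (by linarith)
  · have : f (x - δ) = 0 := (xstar_zero_iff hc hnn hm ht hz _).mpr (le_of_lt hlt)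
    rw [this]; exact hx
lemma key_limit
    (I J : ℕ) (hI : 0 < I)
    (h : Fin I → ℝ → ℝ)
    (hcont : ∀ i, Continuous (h i))
    (hnonneg : ∀ i x, 0 ≤ h i x)
    (hmono : ∀ i, Monotone (h i))
    (htop : ∀ i, Filter.Tendsto (h i) Filter.atTop Filter.atTop)
    (hzero : ∀ i, ∃ x, h i x = 0)
    (hxle : ∀ i, xstar (h i) ≤ 0)
    (G : Fin J → Finset (Fin I))
    (hGcover : ∀ i, ∃ j, i ∈ G j)
    (hstrict : ∀ i, StrictMonoOn (h i) (Set.Ici (xstar (h i))))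
    (F : ℝ → Fin I → ℝ)
    (hF : ∀ t : ℝ, 0 ≤ t → IsGreatestMS I J h G t (F t))
    (t₀ : ℝ) (ht₀ : 0 ≤ t₀)
    (s : ℕ → ℝ) (hs0 : ∀ n, 0 ≤ s n) (hslim : Filter.Tendsto s Filter.atTop (nhds t₀))
    (astar : Fin I → ℝ)
    (hconv : Filter.Tendsto (fun n => F (s n)) Filter.atTop (nhds astar)) :
    astar = F t₀ := by
  classical
  have hNe : Nonempty (Fin I) := Fin.pos_iff_nonempty.mp hI
  set v : ℕ → Fin I → ℝ := fun n => F (s n) with hv_def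
  have hv : ∀ n, IsGreatestMS I J h G (s n) (v n) := fun n => hF (s n) (hs0 n)
  have hcoord : ∀ i, Filter.Tendsto (fun n => v n i) Filter.atTop (nhds (astar i)) :=
    fun i => tendsto_pi_nhds.mp hconv i
  have hsumlim : ∀ j : Fin J, Filter.Tendsto (fun n => ∑ i ∈ G j, h i (v n i))
      Filter.atTop (nhds (∑ i ∈ G j, h i (astar i))) := by
    intro j
    exact tendsto_finset_sum _ (fun i _ => ((hcont i).tendsto (astar i)).comp (hcoord i))
  have hA : astar ∈ admissible I J h G t₀ := by
    constructor
    · intro i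
      exact le_of_tendsto_of_tendsto' (hcoord i) hslim (fun n => (hv n).1.1 i)
    · intro j
      exact le_of_tendsto_of_tendsto' (hsumlim j) hslim (fun n => (hv n).1.2 j)
  set b : Fin I → ℝ := F t₀ with hb_def
  have hbA : b ∈ admissible I J h G t₀ := (hF t₀ ht₀).1
  have hms : msLE I astar b := (hF t₀ ht₀).2 astar hA
  by_contra hne
  obtain ⟨L, hLeq, hcases⟩ := cert I astar b hms hne
  -- the contradiction pattern
  have contra : ∀ (n : ℕ) (u : Fin I → ℝ) (k : Fin I),
      u ∈ admissible I J h G (s n) → (∀ j, u j = v n j ∨ v n k < u j) → v n k < u k → False := by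
    intro n u k huA hAc hkc
    exact beat I u (v n) k hAc hkc ((hv n).2 u huA)
  rcases hcases with ⟨j₀, hj₀L, hj₀min, hj₀lt⟩ | ⟨k, hkL, hklt, hkmin, hkle⟩
  · -- CASE A
    set α := astar j₀ with hα
    have hj₀c : j₀ ∈ Lᶜ := Finset.mem_compl.mpr hj₀L
    have hLcne : (Lᶜ : Finset (Fin I)).Nonempty := ⟨j₀, hj₀c⟩
    set m := (Lᶜ).inf' hLcne (fun j => b j - α) with hm_def
    have hm : 0 < m := by
      rw [Finset.lt_inf'_iff]
      intro j hj
      exact sub_pos.mpr (hj₀lt j (Finset.mem_compl.mp hj))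
    set δ := m / 2 with hδ_def
    have hδ : 0 < δ := by positivity
    have hbδ : ∀ j, j ∉ L → α + δ ≤ b j - δ := by
      intro j hj
      have : m ≤ b j - α := Finset.inf'_le _ (Finset.mem_compl.mpr hj)
      rw [hδ_def]; linarith
    set u : ℕ → Fin I → ℝ := fun n i => if i ∈ L then v n i else b i - δ with hu_def
    have E1 : ∀ᶠ n in Filter.atTop, v n j₀ < α + δ :=
      (hcoord j₀).eventually_lt_const (by linarith)
    have E2 : ∀ᶠ n in Filter.atTop, t₀ - δ < s n :=
      hslim.eventually_const_lt (by linarith)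
    have E3 : ∀ᶠ n in Filter.atTop, ∀ j : Fin J, ∑ i ∈ G j, h i (u n i) ≤ s n := by
      rw [Filter.eventually_all]
      intro j
      have hsplit : ∀ n, ∑ i ∈ G j, h i (u n i)
          = (∑ i ∈ (G j).filter (fun i => i ∈ L), h i (v n i))
            + ∑ i ∈ (G j).filter (fun i => ¬ i ∈ L), h i (b i - δ) := by
        intro n
        rw [← Finset.sum_filter_add_sum_filter_not (G j) (fun i => i ∈ L)
          (fun i => h i (u n i))]
        congr 1
        · exact Finset.sum_congr rfl (fun i hi => by
            simp only [hu_def]; rw [if_pos (Finset.mem_filter.mp hi).2])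
        · exact Finset.sum_congr rfl (fun i hi => by
            simp only [hu_def]; rw [if_neg (Finset.mem_filter.mp hi).2])
      by_cases hcase : ∀ i ∈ G j, i ∉ L → h i (b i) = 0
      · refine Filter.Eventually.of_forall (fun n => ?_)
        rw [hsplit n]
        have h2 : ∑ i ∈ (G j).filter (fun i => ¬ i ∈ L), h i (b i - δ) = 0 := by
          refine Finset.sum_eq_zero (fun i hi => ?_)
          obtain ⟨hiG, hiL⟩ := Finset.mem_filter.mp hi
          have hz := hcase i hiG hiL
          have hle := hmono i (by linarith : b i - δ ≤ b i)
          have hge := hnonneg i (b i - δ)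
          linarith
        rw [h2, add_zero]
        calc ∑ i ∈ (G j).filter (fun i => i ∈ L), h i (v n i)
            ≤ ∑ i ∈ G j, h i (v n i) :=
              Finset.sum_le_sum_of_subset_of_nonneg (Finset.filter_subset _ _)
                (fun i _ _ => hnonneg i _)
          _ ≤ s n := (hv n).1.2 j
      · push_neg at hcase
        obtain ⟨i₁, hi₁G, hi₁L, hi₁ne⟩ := hcase
        have hi₁pos : 0 < h i₁ (b i₁) := lt_of_le_of_ne (hnonneg _ _) (Ne.symm hi₁ne)
        set c := h i₁ (b i₁) - h i₁ (b i₁ - δ) with hc_def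
        have hc : 0 < c := sub_pos.mpr
          (strict_decrease (hcont i₁) (hnonneg i₁) (hmono i₁) (htop i₁) (hzero i₁)
            (hstrict i₁) hi₁pos hδ)
        set Λ := ∑ i ∈ (G j).filter (fun i => i ∈ L), h i (astar i) with hΛ_def
        set C := ∑ i ∈ (G j).filter (fun i => ¬ i ∈ L), h i (b i - δ) with hC_def
        have hkey1 : Λ + C + c ≤ t₀ := by
          have h2 : c ≤ ∑ i ∈ (G j).filter (fun i => ¬ i ∈ L), (h i (b i) - h i (b i - δ)) := by
            have := Finset.single_le_sum (f := fun i => h i (b i) - h i (b i - δ))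
              (s := (G j).filter (fun i => ¬ i ∈ L))
              (fun i _ => sub_nonneg.mpr (hmono i (by linarith : b i - δ ≤ b i)))
              (Finset.mem_filter.mpr ⟨hi₁G, hi₁L⟩)
            rw [hc_def]; exact this
          rw [Finset.sum_sub_distrib] at h2
          have hΛeq : Λ = ∑ i ∈ (G j).filter (fun i => i ∈ L), h i (b i) :=
            Finset.sum_congr rfl (fun i hi => by rw [hLeq i (Finset.mem_filter.mp hi).2])
          have h3 := hbA.2 j
          rw [← Finset.sum_filter_add_sum_filter_not (G j) (fun i => i ∈ L)
            (fun i => h i (b i))] at h3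
          rw [hC_def]
          linarith
        have hfl : Filter.Tendsto (fun n => ∑ i ∈ (G j).filter (fun i => i ∈ L), h i (v n i))
            Filter.atTop (nhds Λ) :=
          tendsto_finset_sum _ (fun i _ => ((hcont i).tendsto (astar i)).comp (hcoord i))
        have E4 : ∀ᶠ n in Filter.atTop,
            (∑ i ∈ (G j).filter (fun i => i ∈ L), h i (v n i)) < Λ + c/2 :=
          hfl.eventually_lt_const (by linarith)
        have E5 : ∀ᶠ n in Filter.atTop, t₀ - c/2 < s n :=
          hslim.eventually_const_lt (by linarith)
        filter_upwards [E4, E5] with n h4 h5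
        rw [hsplit n]
        linarith
    obtain ⟨n, h1, h2, h3⟩ := (E1.and (E2.and E3)).exists
    obtain ⟨k, hkc, hkmin'⟩ := Finset.exists_min_image Lᶜ (v n) hLcne
    have hkL' : k ∉ L := Finset.mem_compl.mp hkc
    have hvk : v n k < α + δ := lt_of_le_of_lt (hkmin' j₀ hj₀c) h1
    refine contra n (u n) k ⟨?_, fun j => h3 j⟩ ?_ ?_
    · intro i
      by_cases hiL : i ∈ L
      · simp only [hu_def]; rw [if_pos hiL]; exact (hv n).1.1 i
      · simp only [hu_def]; rw [if_neg hiL]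
        have := hbA.1 i
        linarith [h2.le]
    · intro j
      by_cases hjL : j ∈ L
      · left; simp only [hu_def]; rw [if_pos hjL]
      · right; simp only [hu_def]; rw [if_neg hjL]
        have := hbδ j hjL
        linarith
    · simp only [hu_def]; rw [if_neg hkL']
      have := hbδ k hkL'
      linarith
  · -- CASE B
    set ν := astar k with hν_def
    by_cases hνx : ν < xstar (h k)
    · -- free raise below the zero threshold
      set η := (xstar (h k) - ν) / 2 with hη_def
      have hη : 0 < η := by rw [hη_def]; linarith
      obtain ⟨n, h1⟩ := ((hcoord k).eventually_lt_const
        (show ν < ν + η by linarith)).exists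
      set u : Fin I → ℝ := fun i => if i = k then v n k + η else v n i with hu_def
      have huk : u k = v n k + η := by rw [hu_def]; simp
      have huo : ∀ i, i ≠ k → u i = v n i := by
        intro i hik; rw [hu_def]; simp [hik]
      have hukx : v n k + η ≤ xstar (h k) := by rw [hη_def] at h1 ⊢; linarith
      have huk0 : h k (v n k + η) = 0 :=
        (xstar_zero_iff (hcont k) (hnonneg k) (hmono k) (htop k) (hzero k) _).mpr hukx
      refine contra n u k ⟨?_, ?_⟩ ?_ ?_
      · intro i
        by_cases hik : i = k
        · subst hik; rw [huk]
          exact le_trans hukx (le_trans (hxle i) (hs0 n))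
        · rw [huo i hik]; exact (hv n).1.1 i
      · intro j
        calc ∑ i ∈ G j, h i (u i) ≤ ∑ i ∈ G j, h i (v n i) := by
              refine Finset.sum_le_sum (fun i _ => ?_)
              by_cases hik : i = k
              · subst hik; rw [huk, huk0]; exact hnonneg _ _
              · rw [huo i hik]
          _ ≤ s n := (hv n).1.2 j
      · intro j
        by_cases hjk : j = k
        · subst hjk; right; rw [huk]; linarith
        · left; rw [huo j hjk]
      · rw [huk]; linarith
    · push_neg at hνx
      set R := Finset.univ.filter (fun i => ν < astar i ∧ 0 < h i (astar i)) with hR_def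
      have hkR : k ∉ R := by
        rw [hR_def]
        simp only [Finset.mem_filter, Finset.mem_univ, true_and, not_and]
        intro hlt2
        exact absurd (hν_def ▸ hlt2) (lt_irrefl ν)
      obtain ⟨δ', hδ'pos, hδ'R⟩ : ∃ δ', 0 < δ' ∧ ∀ i ∈ R, ν + 2*δ' ≤ astar i := by
        by_cases hRne : R.Nonempty
        · refine ⟨R.inf' hRne (fun i => astar i - ν) / 2, ?_, ?_⟩
          · have h1 : 0 < R.inf' hRne (fun i => astar i - ν) := by
              rw [Finset.lt_inf'_iff]
              intro i hi
              have := (Finset.mem_filter.mp hi).2.1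
              linarith
            linarith
          · intro i hi
            have h1 : R.inf' hRne (fun i => astar i - ν) ≤ astar i - ν := Finset.inf'_le _ hi
            linarith
        · exact ⟨1, one_pos, fun i hi => absurd ⟨i, hi⟩ hRne⟩
      set σ : Fin J → ℝ := fun j => t₀ - ∑ i ∈ G j, h i (astar i) with hσ_def
      have hσ0 : ∀ j, 0 ≤ σ j := fun j => sub_nonneg.mpr (hA.2 j)
      by_cases hdir : ∃ j, k ∈ G j ∧ σ j = 0 ∧ ∀ i ∈ G j, i ∉ R
      · -- tight constraint with nothing to rob : direct contradiction
        obtain ⟨j, hkG, htight, hnoR⟩ := hdir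
        have hterm : ∀ i ∈ G j, h i (astar i) ≤ h i (b i) := by
          intro i hi
          by_cases hiL : i ∈ L
          · rw [hLeq i hiL]
          · rcases eq_or_lt_of_le (hkmin i hiL) with heq | hlt2
            · rw [← heq]
              exact hmono i (hkle i hiL)
            · have hiR := hnoR i hi
              rw [hR_def] at hiR
              simp only [Finset.mem_filter, Finset.mem_univ, true_and, not_and,
                not_lt] at hiR
              exact le_trans (hiR hlt2) (hnonneg i (b i))
        have hastar_eq : ∑ i ∈ G j, h i (astar i) = t₀ := by
          have h1 : σ j = t₀ - ∑ i ∈ G j, h i (astar i) := by rw [hσ_def]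
          rw [htight] at h1
          linarith
        have hsum_eq : ∑ i ∈ G j, (h i (b i) - h i (astar i)) = 0 := by
          have h1 : ∑ i ∈ G j, h i (b i) ≤ t₀ := hbA.2 j
          have h3 : ∑ i ∈ G j, h i (astar i) ≤ ∑ i ∈ G j, h i (b i) := Finset.sum_le_sum hterm
          rw [Finset.sum_sub_distrib]
          linarith
        have hkeq : h k (b k) - h k (astar k) = 0 :=
          (Finset.sum_eq_zero_iff_of_nonneg
            (fun i hi => sub_nonneg.mpr (hterm i hi))).mp hsum_eq k hkG
        rw [← hν_def] at hkeq
        have hlt3 : h k ν < h k (b k) :=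
          hstrict k (Set.mem_Ici.mpr hνx)
            (Set.mem_Ici.mpr (le_trans hνx (le_of_lt hklt))) hklt
        linarith
      · -- robbery construction
        push_neg at hdir
        have hrob : ∀ j, k ∈ G j → σ j = 0 → ∃ i, i ∈ G j ∧ i ∈ R := by
          intro j hkG hσj
          obtain ⟨i, hiG, hiR⟩ := hdir j hkG hσj
          exact ⟨i, hiG, hiR⟩
        set g : Fin J → ℝ := fun j =>
          ∑ i ∈ (G j).filter (fun i => i ∈ R), (h i (astar i) - h i (astar i - δ')) with hg_def
        have hgterms : ∀ (j : Fin J), ∀ i ∈ (G j).filter (fun i => i ∈ R),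
            0 ≤ h i (astar i) - h i (astar i - δ') := by
          intro j i _
          exact sub_nonneg.mpr (hmono i (by linarith))
        have hgpos : ∀ j, k ∈ G j → σ j = 0 → 0 < g j := by
          intro j hkG hσj
          obtain ⟨i₂, hi₂G, hi₂R⟩ := hrob j hkG hσj
          have hi₂pos : 0 < h i₂ (astar i₂) := by
            have := (Finset.mem_filter.mp (hR_def ▸ hi₂R)).2.2
            exact this
          have hterm2 : 0 < h i₂ (astar i₂) - h i₂ (astar i₂ - δ') :=
            sub_pos.mpr (strict_decrease (hcont i₂) (hnonneg i₂) (hmono i₂) (htop i₂)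
              (hzero i₂) (hstrict i₂) hi₂pos hδ'pos)
          have hle : h i₂ (astar i₂) - h i₂ (astar i₂ - δ') ≤ g j := by
            have := Finset.single_le_sum (f := fun i => h i (astar i) - h i (astar i - δ'))
              (s := (G j).filter (fun i => i ∈ R)) (hgterms j)
              (Finset.mem_filter.mpr ⟨hi₂G, hi₂R⟩)
            rw [hg_def]; exact this
          linarith
        set Jset := Finset.univ.filter (fun j : Fin J => k ∈ G j) with hJset_def
        have hJne : Jset.Nonempty := by
          obtain ⟨j, hj⟩ := hGcover k
          exact ⟨j, Finset.mem_filter.mpr ⟨Finset.mem_univ _, hj⟩⟩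
        set ρ := Jset.inf' hJne (fun j => if σ j = 0 then g j else σ j) with hρ_def
        have hρpos : 0 < ρ := by
          rw [hρ_def, Finset.lt_inf'_iff]
          intro j hj
          have hkG : k ∈ G j := (Finset.mem_filter.mp hj).2
          by_cases hσj : σ j = 0
          · rw [if_pos hσj]; exact hgpos j hkG hσj
          · rw [if_neg hσj]; exact lt_of_le_of_ne (hσ0 j) (Ne.symm hσj)
        have hmemJ : ∀ j, k ∈ G j → j ∈ Jset := by
          intro j hkG
          rw [hJset_def]
          exact Finset.mem_filter.mpr ⟨Finset.mem_univ j, hkG⟩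
        have hρg : ∀ j, k ∈ G j → σ j = 0 → ρ ≤ g j := by
          intro j hkG hσj
          have h0 := Finset.inf'_le (fun j => if σ j = 0 then g j else σ j)
            (hmemJ j hkG)
          rw [if_pos hσj] at h0
          rw [hρ_def]
          exact h0
        have hρσ : ∀ j, k ∈ G j → σ j ≠ 0 → ρ ≤ σ j := by
          intro j hkG hσj
          have h0 := Finset.inf'_le (fun j => if σ j = 0 then g j else σ j)
            (hmemJ j hkG)
          rw [if_neg hσj] at h0
          rw [hρ_def]
          exact h0
        have hνt : ν < t₀ := lt_of_lt_of_le hklt (hbA.1 k)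
        obtain ⟨ε, hεpos, hball⟩ :=
          Metric.continuousAt_iff.mp (hcont k).continuousAt (ρ/4) (by positivity)
        set η := min (ε/3) ((t₀ - ν)/2) with hη_def
        have hηpos : 0 < η := lt_min (by positivity) (by linarith)
        have hηε : 3*η ≤ ε := by
          have := min_le_left (ε/3) ((t₀ - ν)/2)
          rw [hη_def]; linarith
        have hηt : ν + 2*η ≤ t₀ := by
          have := min_le_right (ε/3) ((t₀ - ν)/2)
          rw [hη_def]; linarith
        have hcost : ∀ x, |x - ν| < η → h k (x + η) - h k x < ρ/2 := by
          intro x hx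
          have hxη : |x + η - ν| < ε := by
            have h1 : |x + η - ν| ≤ |x - ν| + |η| := by
              have : x + η - ν = (x - ν) + η := by ring
              rw [this]; exact abs_add_le _ _
            rw [abs_of_pos hηpos] at h1
            linarith
          have hxε : |x - ν| < ε := lt_of_lt_of_le hx (by linarith)
          have b1 := hball (show dist (x+η) ν < ε by rwa [Real.dist_eq])
          have b2 := hball (show dist x ν < ε by rwa [Real.dist_eq])
          rw [Real.dist_eq] at b1 b2
          have c1 := abs_lt.mp b1
          have c2 := abs_lt.mp b2
          linarith [c1.1, c1.2, c2.1, c2.2]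
        set u : ℕ → Fin I → ℝ := fun n i =>
          if i = k then v n k + η else if i ∈ R then v n i - δ' else v n i with hu_def
        have huk : ∀ n, u n k = v n k + η := by
          intro n; rw [hu_def]; simp
        have huR : ∀ n i, i ≠ k → i ∈ R → u n i = v n i - δ' := by
          intro n i hik hiR; rw [hu_def]; simp [hik, hiR]
        have huo : ∀ n i, i ≠ k → i ∉ R → u n i = v n i := by
          intro n i hik hiR; rw [hu_def]; simp [hik, hiR]
        have EB0 : ∀ᶠ n in Filter.atTop, |v n k - ν| < η := by
          have h1 : ∀ᶠ n in Filter.atTop, v n k < ν + η :=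
            (hcoord k).eventually_lt_const (by linarith)
          have h2 : ∀ᶠ n in Filter.atTop, ν - η < v n k :=
            (hcoord k).eventually_const_lt (by linarith)
          filter_upwards [h1, h2] with n a1 a2
          rw [abs_lt]; constructor <;> linarith
        have EB1 : ∀ᶠ n in Filter.atTop, ∀ i, i ∈ R → v n k < v n i - δ' := by
          rw [Filter.eventually_all]
          intro i
          by_cases hiR : i ∈ R
          · have h1 : ∀ᶠ n in Filter.atTop, v n k < ν + δ'/2 :=
              (hcoord k).eventually_lt_const (by linarith)
            have h2 : ∀ᶠ n in Filter.atTop, ν + δ'/2 + δ' < v n i :=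
              (hcoord i).eventually_const_lt (by
                have := hδ'R i hiR; linarith)
            filter_upwards [h1, h2] with n a1 a2
            intro _
            linarith
          · exact Filter.Eventually.of_forall (fun n hiR' => absurd hiR' hiR)
        have EB2 : ∀ᶠ n in Filter.atTop, v n k + η < s n := by
          have h1 : ∀ᶠ n in Filter.atTop, v n k < ν + η/2 :=
            (hcoord k).eventually_lt_const (by linarith)
          have h2 : ∀ᶠ n in Filter.atTop, ν + 2*η - η/2 < s n :=
            hslim.eventually_const_lt (by linarith)
          filter_upwards [h1, h2] with n a1 a2
          linarith
        have EB3 : ∀ᶠ n in Filter.atTop, ∀ j : Fin J, ∑ i ∈ G j, h i (u n i) ≤ s n := by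
          rw [Filter.eventually_all]
          intro j
          by_cases hkG : k ∈ G j
          · -- the interesting constraints
            set RG := (G j).filter (fun i => i ∈ R) with hRG_def
            have hRGsub : RG ⊆ (G j).erase k := by
              intro i hi
              obtain ⟨hiG, hiR⟩ := Finset.mem_filter.mp hi
              refine Finset.mem_erase.mpr ⟨?_, hiG⟩
              intro hik
              exact hkR (hik ▸ hiR)
            have hsum_le : ∀ n, ∑ i ∈ G j, h i (u n i) ≤ ∑ i ∈ G j, h i (v n i)
                + (h k (v n k + η) - h k (v n k))
                - ∑ i ∈ RG, (h i (v n i) - h i (v n i - δ')) := by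
              intro n
              have e1 : ∑ i ∈ G j, h i (u n i) = ∑ i ∈ G j, h i (v n i)
                  + ∑ i ∈ G j, (h i (u n i) - h i (v n i)) := by
                rw [Finset.sum_sub_distrib]; ring
              rw [e1]
              have e2 : ∑ i ∈ G j, (h i (u n i) - h i (v n i))
                  = (h k (u n k) - h k (v n k))
                    + ∑ i ∈ (G j).erase k, (h i (u n i) - h i (v n i)) :=
                (Finset.add_sum_erase _ _ hkG).symm
              have e3 : h k (u n k) = h k (v n k + η) := by rw [huk]
              have e4 : ∑ i ∈ (G j).erase k, (h i (u n i) - h i (v n i))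
                  ≤ ∑ i ∈ RG, (h i (u n i) - h i (v n i)) := by
                rw [← Finset.sum_sdiff hRGsub]
                have e5 : ∑ i ∈ (G j).erase k \ RG, (h i (u n i) - h i (v n i)) ≤ 0 := by
                  refine Finset.sum_nonpos (fun i hi => ?_)
                  obtain ⟨hie, hiRG⟩ := Finset.mem_sdiff.mp hi
                  obtain ⟨hik, hiG⟩ := Finset.mem_erase.mp hie
                  have hiR : i ∉ R := fun hiR => hiRG (Finset.mem_filter.mpr ⟨hiG, hiR⟩)
                  rw [huo n i hik hiR]
                  simp
                linarith
              have e6 : ∑ i ∈ RG, (h i (u n i) - h i (v n i))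
                  = - ∑ i ∈ RG, (h i (v n i) - h i (v n i - δ')) := by
                rw [← Finset.sum_neg_distrib]
                refine Finset.sum_congr rfl (fun i hi => ?_)
                obtain ⟨hiG, hiR⟩ := Finset.mem_filter.mp hi
                have hik : i ≠ k := (Finset.mem_erase.mp (hRGsub hi)).1
                rw [huR n i hik hiR]
                ring
              rw [e2, e3] at *
              linarith [e4, e6.le, e6.ge]
            have hgainlim : Filter.Tendsto
                (fun n => ∑ i ∈ RG, (h i (v n i) - h i (v n i - δ'))) Filter.atTop
                (nhds (g j)) := by
              rw [hg_def]
              refine tendsto_finset_sum _ (fun i _ => ?_)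
              exact Filter.Tendsto.sub
                (((hcont i).tendsto (astar i)).comp (hcoord i))
                (((hcont i).tendsto (astar i - δ')).comp ((hcoord i).sub_const δ'))
            have hgain0 : ∀ n, 0 ≤ ∑ i ∈ RG, (h i (v n i) - h i (v n i - δ')) := by
              intro n
              refine Finset.sum_nonneg (fun i _ => ?_)
              exact sub_nonneg.mpr (hmono i (by linarith))
            have E6 : ∀ᶠ n in Filter.atTop, h k (v n k + η) - h k (v n k) < ρ/2 :=
              EB0.mono (fun n hn => hcost _ hn)
            by_cases hσj : σ j = 0
            · have E7 : ∀ᶠ n in Filter.atTop,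
                  g j - ρ/4 < ∑ i ∈ RG, (h i (v n i) - h i (v n i - δ')) :=
                hgainlim.eventually_const_lt (by linarith)
              have E8 : ∀ᶠ n in Filter.atTop,
                  (∑ i ∈ G j, h i (v n i)) < t₀ + ρ/4 := by
                refine (hsumlim j).eventually_lt_const ?_
                have h0 := hσ0 j
                have h1 : σ j = t₀ - ∑ i ∈ G j, h i (astar i) := by rw [hσ_def]
                linarith
              filter_upwards [E6, E7, (Filter.Eventually.of_forall (fun n => (hv n).1.2 j))]
                with n a1 a2 a3
              have hq := hsum_le n
              have hrg := hρg j hkG hσj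
              linarith
            · have hρσj := hρσ j hkG hσj
              have E8 : ∀ᶠ n in Filter.atTop,
                  (∑ i ∈ G j, h i (v n i)) < (t₀ - σ j) + ρ/4 := by
                refine (hsumlim j).eventually_lt_const ?_
                have h1 : σ j = t₀ - ∑ i ∈ G j, h i (astar i) := by rw [hσ_def]
                linarith
              have E9 : ∀ᶠ n in Filter.atTop, t₀ - ρ/4 < s n :=
                hslim.eventually_const_lt (by linarith)
              filter_upwards [E6, E8, E9] with n a1 a2 a3
              refine le_of_lt ?_
              calc ∑ i ∈ G j, h i (u n i)
                  ≤ ∑ i ∈ G j, h i (v n i) + (h k (v n k + η) - h k (v n k))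
                    - ∑ i ∈ RG, (h i (v n i) - h i (v n i - δ')) := hsum_le n
                _ ≤ ∑ i ∈ G j, h i (v n i) + (h k (v n k + η) - h k (v n k)) := by
                    linarith [hgain0 n]
                _ < (t₀ - σ j + ρ/4) + ρ/2 := add_lt_add a2 a1
                _ ≤ t₀ - ρ/4 := by clear_value σ ρ; linarith [hρσj]
                _ < s n := a3
          · -- k not involved : sum only decreases
            refine Filter.Eventually.of_forall (fun n => ?_)
            calc ∑ i ∈ G j, h i (u n i) ≤ ∑ i ∈ G j, h i (v n i) := by
                  refine Finset.sum_le_sum (fun i hi => ?_)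
                  have hik : i ≠ k := fun hik => hkG (hik ▸ hi)
                  by_cases hiR : i ∈ R
                  · rw [huR n i hik hiR]
                    exact hmono i (by linarith)
                  · rw [huo n i hik hiR]
              _ ≤ s n := (hv n).1.2 j
        obtain ⟨n, hE1, hE2, hE3⟩ := (EB1.and (EB2.and EB3)).exists
        refine contra n (u n) k ⟨?_, fun j => hE3 j⟩ ?_ ?_
        · intro i
          by_cases hik : i = k
          · subst hik; rw [huk n]; exact le_of_lt hE2
          · by_cases hiR : i ∈ R
            · rw [huR n i hik hiR]
              have := (hv n).1.1 i
              linarith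
            · rw [huo n i hik hiR]
              exact (hv n).1.1 i
        · intro j
          by_cases hjk : j = k
          · subst hjk; right; rw [huk n]; linarith
          · by_cases hjR : j ∈ R
            · right; rw [huR n j hjk hjR]
              exact hE1 j hjR
            · left; rw [huo n j hjk hjR]
        · rw [huk n]; linarith
/-- Theorem 1 of the paper: if each `h_i` is strictly increasing on
`[x*_i, ∞)`, then the mapping `F`, sending `t` to the `⪕`-greatest element of `A_t`,
is continuous on `[0, ∞)`. -/
theorem F_continuous
    (I J : ℕ) (hI : 0 < I) (hJ : 0 < J)
    (h : Fin I → ℝ → ℝ)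
    (hcont : ∀ i, Continuous (h i))
    (hnonneg : ∀ i x, 0 ≤ h i x)
    (hmono : ∀ i, Monotone (h i))
    (htop : ∀ i, Filter.Tendsto (h i) Filter.atTop Filter.atTop)
    (hzero : ∀ i, ∃ x, h i x = 0)
    (hxle : ∀ i, xstar (h i) ≤ 0)
    (G : Fin J → Finset (Fin I))
    (hGinj : Function.Injective G)
    (hGne : ∀ j, (G j).Nonempty)
    (hGcover : ∀ i, ∃ j, i ∈ G j)
    (hstrict : ∀ i, StrictMonoOn (h i) (Set.Ici (xstar (h i))))
    (F : ℝ → Fin I → ℝ)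
    (hF : ∀ t : ℝ, 0 ≤ t → IsGreatestMS I J h G t (F t)) :
    ContinuousOn F (Set.Ici 0) := by
  classical
  haveI hNe : Nonempty (Fin I) := Fin.pos_iff_nonempty.mp hI
  set lo : ℝ := (Finset.univ.inf' Finset.univ_nonempty (fun i => xstar (h i))) ⊓ 0
    with hlo_def
  have hlo0 : lo ≤ 0 := inf_le_right
  have hlox : ∀ i, lo ≤ xstar (h i) := fun i =>
    le_trans inf_le_left (Finset.inf'_le _ (Finset.mem_univ i))
  have hlow : ∀ t, 0 ≤ t → ∀ i, lo ≤ F t i := by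
    intro t ht i
    have hcA : (fun _ : Fin I => lo) ∈ admissible I J h G t := by
      constructor
      · intro i'
        exact le_trans hlo0 ht
      · intro j
        have hz : ∀ i' ∈ G j, h i' lo = 0 := fun i' _ =>
          (xstar_zero_iff (hcont i') (hnonneg i') (hmono i') (htop i') (hzero i')
            lo).mpr (hlox i')
        rw [Finset.sum_eq_zero hz]
        exact ht
    have hms := (hF t ht).2 _ hcA
    calc lo = minval (fun _ : Fin I => lo) := (minval_const lo).symm
      _ ≤ minval (F t) := msLE_minval_le (by omega) _ _ hms
      _ ≤ F t i := minval_le _ i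
  intro t₀ ht₀
  have ht₀' : (0:ℝ) ≤ t₀ := ht₀
  rw [ContinuousWithinAt]
  rw [Filter.tendsto_iff_seq_tendsto]
  intro x hx
  rw [tendsto_nhdsWithin_iff] at hx
  obtain ⟨hx1, hx2⟩ := hx
  set y : ℕ → ℝ := fun n => max (x n) 0 with hy_def
  have hy0 : ∀ n, 0 ≤ y n := fun n => le_max_right _ _
  have hylim : Filter.Tendsto y Filter.atTop (nhds t₀) := by
    have := hx1.max (tendsto_const_nhds (x := (0:ℝ)))
    rwa [max_eq_left ht₀'] at this
  have hFy : Filter.Tendsto (fun n => F (y n)) Filter.atTop (nhds (F t₀)) := by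
    apply Filter.tendsto_of_subseq_tendsto
    intro ns hns
    have h1 : Filter.Tendsto (fun n => y (ns n)) Filter.atTop (nhds t₀) := hylim.comp hns
    have h2 : ∀ᶠ n in Filter.atTop, y (ns n) < t₀ + 1 := h1.eventually_lt_const (by linarith)
    obtain ⟨N, hN⟩ := Filter.eventually_atTop.mp h2
    have hK : IsCompact (Set.univ.pi (fun _ : Fin I => Set.Icc lo (t₀ + 1))) :=
      isCompact_univ_pi (fun _ => isCompact_Icc)
    have hmem : ∀ n, F (y (ns (N + n))) ∈ Set.univ.pi (fun _ : Fin I => Set.Icc lo (t₀ + 1)) := by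
      intro n
      rw [Set.mem_univ_pi]
      intro i
      constructor
      · exact hlow _ (hy0 _) i
      · exact le_trans ((hF _ (hy0 _)).1.1 i) (le_of_lt (hN _ (by omega)))
    obtain ⟨astar, -, φ, hφ, hconv⟩ := hK.tendsto_subseq hmem
    have hseq : Filter.Tendsto (fun n => y (ns (N + φ n))) Filter.atTop (nhds t₀) := by
      refine h1.comp ?_
      refine Filter.tendsto_atTop_mono (fun n => ?_) hφ.tendsto_atTop
      omega
    have hconv' : Filter.Tendsto (fun n => F (y (ns (N + φ n)))) Filter.atTop (nhds astar) :=
      hconv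
    have heq := key_limit I J hI h hcont hnonneg hmono htop hzero hxle G hGcover hstrict F hF
      t₀ ht₀' (fun n => y (ns (N + φ n))) (fun n => hy0 _) hseq astar hconv'
    exact ⟨fun n => N + φ n, heq ▸ hconv'⟩
  refine Filter.Tendsto.congr' ?_ hFy
  filter_upwards [hx2] with n hn
  have hyx : y n = x n := max_eq_left hn
  show F (y n) = F (x n)
  rw [hyx]
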